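/- arXiv:1601.00885 — 8 statements merged into one kernel-verified Lean document; each statement's English description precedes it below -/
import Mathlib

section
/- The maximal ideal m of O is a flat O-module but it is not a projective O-module. -/
/-!
`O` is the valuation ring of the `p`-adic completion of an algebraic closure of a complete
discrete valuation field of mixed characteristic `(0,p)`; we encode it abstractly as a valuation
ring (a local domain), with maximal ideal `m` which is nonzero and idempotent (`m² = m`,
reflecting that the valuation group is dense).  The statement: `m` is a flat `O`-module but
not a projective `O`-module.
-/

universe u

open IsLocalRing TensorProduct

theorem maximalIdeal_flat_not_projective
    (O : Type u) [CommRing O] [IsDomain O] [ValuationRing O]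
    (hne : maximalIdeal O ≠ ⊥)
    (hidem : maximalIdeal O * maximalIdeal O = maximalIdeal O) :
    Module.Flat O (maximalIdeal O) ∧ ¬ Module.Projective O (maximalIdeal O) := by
  constructor
  · -- Flatness: check the ideal criterion; every f.g. ideal of a valuation ring is principal.
    rw [Module.Flat.iff_rTensor_injective]
    intro I hI
    obtain ⟨a, rfl⟩ := (IsBezout.isPrincipal_of_FG I hI).1
    by_cases ha : a = 0
    · subst ha
      rw [show Submodule.span O ({(0:O)} : Set O) = ⊥ from Submodule.span_zero_singleton O]
      intro x y _
      have : Subsingleton (↥(⊥ : Ideal O) ⊗[O] ↥(maximalIdeal O)) := inferInstance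
      exact Subsingleton.elim x y
    · -- `span {a} ≅ O` and the composite `O → span{a} → O` is multiplication by `a`.
      set M := ↥(maximalIdeal O)
      let e : O ≃ₗ[O] ↥(Submodule.span O ({a} : Set O)) :=
        LinearEquiv.toSpanNonzeroSingleton O O a ha
      have hcomp : (Submodule.span O ({a} : Set O)).subtype ∘ₗ e.toLinearMap =
          LinearMap.toSpanSingleton O O a := by
        ext
        rfl
      have h1 : Function.Injective
          (LinearMap.rTensor M (LinearMap.toSpanSingleton O O a)) := by
        have hts : LinearMap.toSpanSingleton O O a = a • LinearMap.id := by
          ext; simp [LinearMap.toSpanSingleton_apply, smul_eq_mul, mul_comm]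
        rw [hts, LinearMap.rTensor_smul, LinearMap.rTensor_id]
        intro x y hxy
        simp only [LinearMap.smul_apply, LinearMap.id_apply] at hxy
        have h := congrArg (TensorProduct.lid O M) hxy
        rw [map_smul, map_smul] at h
        exact (TensorProduct.lid O M).injective (smul_right_injective M ha h)
      have h3 : Function.Injective
          (LinearMap.rTensor M ((Submodule.span O ({a} : Set O)).subtype ∘ₗ e.toLinearMap)) := by
        rw [hcomp]; exact h1
      rw [LinearMap.rTensor_comp] at h3
      have h4 : Function.Surjective
          (LinearMap.rTensor M e.toLinearMap) := by
        exact LinearMap.rTensor_surjective M e.surjective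
      intro x y hxy
      obtain ⟨x', rfl⟩ := h4 x
      obtain ⟨y', rfl⟩ := h4 y
      have := h3 (by simpa [LinearMap.comp_apply] using hxy)
      rw [this]
  · -- Not projective.
    intro hproj
    obtain ⟨s, hs⟩ := Module.projective_def.mp hproj
    set M := ↥(maximalIdeal O)
    obtain ⟨x0, hx0m, hx0⟩ := Submodule.ne_bot_iff _ |>.mp hne
    set X : M := ⟨x0, hx0m⟩
    -- every coordinate functional vanishing at X vanishes everywhere
    have key : ∀ (f : M →ₗ[O] O) (y : M), (y : O) * f X = x0 * f y := by
      intro f y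
      have h : (y : O) • X = (x0 : O) • y := by
        apply Subtype.ext
        show (y : O) * x0 = x0 * (y : O)
        exact mul_comm _ _
      have := congrArg f h
      simpa [map_smul, smul_eq_mul] using this
    have hsupp : ∀ y : M, (s y).support ⊆ (s X).support := by
      intro y m hm
      rw [Finsupp.mem_support_iff] at hm ⊢
      by_contra h0
      have hk := key ((Finsupp.lapply m) ∘ₗ s) y
      simp only [LinearMap.comp_apply, Finsupp.lapply_apply, h0, mul_zero] at hk
      exact hm (by
        rcases mul_eq_zero.mp hk.symm with h | h
        · exact absurd h hx0
        · exact h)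
    -- hence the maximal ideal is finitely generated
    classical
    have hfg : (maximalIdeal O).FG := by
      refine ⟨(s X).support.image (fun m : M => (m : O)), le_antisymm ?_ ?_⟩
      · rw [Ideal.span_le]
        intro z hz
        simp only [Finset.coe_image, Set.mem_image] at hz
        obtain ⟨m, _, rfl⟩ := hz
        exact m.2
      · intro y hy
        set Y : M := ⟨y, hy⟩ with hYdef
        have hY : Finsupp.linearCombination O (id : M → M) (s Y) = Y := hs Y
        have hYO : y = ∑ m ∈ (s Y).support, (s Y) m * (m : O) := by
          have h2 : ((maximalIdeal O).subtype)
              ((Finsupp.linearCombination O (id : M → M)) (s Y)) = y := congrArg _ hY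
          rw [Finsupp.linearCombination_apply, Finsupp.sum, map_sum] at h2
          simp only [map_smul, Submodule.subtype_apply, id_eq, smul_eq_mul] at h2
          exact h2.symm
        rw [hYO]
        apply Submodule.sum_mem
        intro m hm
        apply Ideal.mul_mem_left
        apply Ideal.subset_span
        simp only [Finset.coe_image, Set.mem_image]
        exact ⟨m, hsupp Y hm, rfl⟩
    -- Nakayama gives a contradiction with `m ≠ ⊥`
    have := Submodule.eq_bot_of_le_smul_of_le_jacobson_bot (maximalIdeal O)
      (maximalIdeal O) hfg
      (by rw [smul_eq_mul, hidem])
      ((IsLocalRing.jacobson_eq_maximalIdeal ⊥ bot_ne_top).ge)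
    exact hne this
end

section
/- The multiplication map m ⊗_O m → m is an isomorphism of O-modules. -/
/-!
Identify `m ⊗_O m → m` with `m ⊗_O m → O ⊗_O m ≅ m`, i.e. with the tensor product of the
inclusion `m ↪ O` with `m`: flatness of `m` makes this injective. The image of the
multiplication map is `m · m`, which is all of `m` by idempotency.
-/

universe u

open IsLocalRing TensorProduct

noncomputable def mulMap (O : Type u) [CommRing O] (m : Ideal O) :
    (m ⊗[O] m) →ₗ[O] m :=
  TensorProduct.lift ((LinearMap.lsmul O m).comp m.subtype)

section

variable {R : Type u} [CommRing R] (I : Ideal R)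

theorem mulMap_eq_lid_comp_rTensor_subtype :
    mulMap R I = (TensorProduct.lid R I).toLinearMap ∘ₗ I.subtype.rTensor I := by
  rw [LinearMap.lid_comp_rTensor]
  rfl

theorem subtype_comp_mulMap : I.subtype ∘ₗ mulMap R I = Submodule.mulMap I I :=
  TensorProduct.ext' fun _ _ ↦ rfl

theorem mulMap_injective [Module.Flat R I] : Function.Injective (mulMap R I) := by
  rw [mulMap_eq_lid_comp_rTensor_subtype]
  exact (TensorProduct.lid R I).injective.comp (Module.Flat.rTensor_preserves_injective_linearMap
    I.subtype Subtype.val_injective)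

theorem mulMap_surjective_of_mul_self_eq (hI : I * I = I) :
    Function.Surjective (mulMap R I) := by
  intro y
  have hy : (y : R) ∈ LinearMap.range (Submodule.mulMap I I) := by
    rw [Submodule.mulMap_range, hI]
    exact y.2
  obtain ⟨z, hz⟩ := hy
  refine ⟨z, Subtype.ext ?_⟩
  rw [← hz, ← subtype_comp_mulMap]
  rfl

end

theorem mulMap_bijective
    (O : Type u) [CommRing O] [IsDomain O] [ValuationRing O]
    (hflat : Module.Flat O (maximalIdeal O))
    (hidem : maximalIdeal O * maximalIdeal O = maximalIdeal O) :
    Function.Bijective (mulMap O (maximalIdeal O)) :=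
  ⟨mulMap_injective _, mulMap_surjective_of_mul_self_eq _ hidem⟩
end

section
/- Let f : M → N be a morphism of O-modules. Then f is an α-isomorphism (i.e. its kernel and cokernel are annihilated by every element of m) if and only if the induced map Hom_O(m, M) → Hom_O(m, N) is an isomorphism. -/
/-!
`O` is the valuation ring of the `p`-adic completion of an algebraic closure of `ℚ_p`,
encoded abstractly as a valuation ring (local domain) with idempotent, flat maximal ideal `m`.
An `O`-module `P` is α-null if `γ • P = 0` for every `γ ∈ m`; a morphism of `O`-modules is an
α-isomorphism if its kernel and cokernel are α-null.  The statement: `f : M → N` is an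
α-isomorphism iff the induced map `Hom_O(m, M) → Hom_O(m, N)` is an isomorphism.
-/

universe u

open IsLocalRing

/-- A morphism of `O`-modules is an α-isomorphism (w.r.t. the ideal `m`) if its kernel and
cokernel are annihilated by every element of `m`. -/
def IsAlphaIso {O : Type u} [CommRing O] (m : Ideal O)
    {M N : Type u} [AddCommGroup M] [Module O M] [AddCommGroup N] [Module O N]
    (f : M →ₗ[O] N) : Prop :=
  (∀ γ ∈ m, ∀ x ∈ LinearMap.ker f, γ • x = 0) ∧
    (∀ γ ∈ m, ∀ y : N, γ • y ∈ LinearMap.range f)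

theorem isAlphaIso_iff_hom_bijective
    (O : Type u) [CommRing O] [IsDomain O] [ValuationRing O]
    (hflat : Module.Flat O (maximalIdeal O))
    (hidem : maximalIdeal O * maximalIdeal O = maximalIdeal O)
    (M N : Type u) [AddCommGroup M] [Module O M] [AddCommGroup N] [Module O N]
    (f : M →ₗ[O] N) :
    IsAlphaIso (maximalIdeal O) f ↔
      Function.Bijective (fun g : (maximalIdeal O) →ₗ[O] M => f ∘ₗ g) := by
  set m := maximalIdeal O with hm
  constructor
  · rintro ⟨hker, hcoker⟩
    have hsmul : ∀ ε ∈ m, ∀ x y : M, f x = f y → ε • x = ε • y := by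
      intro ε hε x y hxy
      have h0 : ε • (x - y) = 0 := hker ε hε _ (by simp [LinearMap.mem_ker, hxy])
      rwa [smul_sub, sub_eq_zero] at h0
    have hfac : ∀ γ ∈ m, ∃ a b : O, a ∈ m ∧ b ∈ m ∧ γ = a * b := by
      intro γ hγ
      rw [← hidem] at hγ
      refine Submodule.mul_induction_on hγ (fun a ha b hb => ⟨a, b, ha, hb, rfl⟩) ?_
      rintro x y ⟨a, b, ha, hb, rfl⟩ ⟨a', b', ha', hb', rfl⟩
      rcases ValuationRing.dvd_total a a' with ⟨c, rfl⟩ | ⟨c, rfl⟩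
      · exact ⟨a, b + c * b', ha, m.add_mem hb (m.mul_mem_left c hb'), by ring⟩
      · exact ⟨a', c * b + b', ha', m.add_mem (m.mul_mem_left c hb) hb', by ring⟩
    constructor
    · -- injectivity
      intro g₁ g₂ hg
      simp only at hg
      ext γ
      obtain ⟨a, b, ha, hb, hab⟩ := hfac (γ : O) γ.2
      have hγ : γ = a • (⟨b, hb⟩ : m) := Subtype.ext (by simp [hab, smul_eq_mul])
      have hfb : f (g₁ ⟨b, hb⟩) = f (g₂ ⟨b, hb⟩) := LinearMap.congr_fun hg ⟨b, hb⟩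
      rw [hγ, map_smul, map_smul]
      exact hsmul a ha _ _ hfb
    · -- surjectivity
      intro h
      have hlift : ∀ δ (hδ : δ ∈ m), ∃ x : M, f x = h ⟨δ, hδ⟩ := by
        intro δ hδ
        obtain ⟨a, b, ha, hb, hab⟩ := hfac δ hδ
        have : (⟨δ, hδ⟩ : m) = a • (⟨b, hb⟩ : m) := Subtype.ext (by simp [hab, smul_eq_mul])
        rw [this, map_smul]
        exact hcoker a ha (h ⟨b, hb⟩)
      choose S hS using hlift
      -- master lemma
      have Lhalf : ∀ ε ∈ m, ∀ δ (hδ : δ ∈ m) (x : M), f x = h ⟨δ, hδ⟩ →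
          ∀ c δ' (hδ' : δ' ∈ m) (x' : M), f x' = h ⟨δ', hδ'⟩ →
          ε * δ = (ε * c) * δ' → ε • x = (ε * c) • x' := by
        intro ε hε δ hδ x hx c δ' hδ' x' hx' heq
        by_cases h0 : ε = 0
        · simp [h0]
        · have hδc : δ = c * δ' := by
            apply mul_left_cancel₀ h0
            rw [heq]; ring
          have hmem : (⟨δ, hδ⟩ : m) = c • (⟨δ', hδ'⟩ : m) := Subtype.ext (by simp [hδc, smul_eq_mul])
          have : f x = f (c • x') := by
            rw [hx, hmem, map_smul, map_smul, hx']
          rw [hsmul ε hε x (c • x') this, smul_smul]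
      have Lkey : ∀ ε ∈ m, ∀ δ (hδ : δ ∈ m) (x : M), f x = h ⟨δ, hδ⟩ →
          ∀ ε' ∈ m, ∀ δ' (hδ' : δ' ∈ m) (x' : M), f x' = h ⟨δ', hδ'⟩ →
          ε * δ = ε' * δ' → ε • x = ε' • x' := by
        intro ε hε δ hδ x hx ε' hε' δ' hδ' x' hx' heq
        rcases ValuationRing.dvd_total ε ε' with ⟨c, rfl⟩ | ⟨c, rfl⟩
        · exact Lhalf ε hε δ hδ x hx c δ' hδ' x' hx' heq
        · exact (Lhalf ε' hε' δ' hδ' x' hx' c δ hδ x hx heq.symm).symm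
      choose a b hamem hbmem hab using fun γ : m => hfac (γ : O) γ.2
      set T : m → M := fun γ => a γ • S (b γ) (hbmem γ) with hT
      have hfT : ∀ γ : m, f (T γ) = h γ := by
        intro γ
        have : γ = a γ • (⟨b γ, hbmem γ⟩ : m) := Subtype.ext (by simp [hab γ, smul_eq_mul])
        rw [hT]
        simp only
        rw [map_smul, hS, ← map_smul, ← this]
      have hmain : ∀ γ γ' : m, a γ ∣ a γ' → T (γ + γ') = T γ + T γ' := by
        intro γ γ' ⟨c, hc⟩
        have hβ : b γ + c * b γ' ∈ m :=
          m.add_mem (hbmem γ) (m.mul_mem_left c (hbmem γ'))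
        have hx' : f (S (b γ) (hbmem γ) + c • S (b γ') (hbmem γ')) = h ⟨b γ + c * b γ', hβ⟩ := by
          have : (⟨b γ + c * b γ', hβ⟩ : m) = ⟨b γ, hbmem γ⟩ + c • (⟨b γ', hbmem γ'⟩ : m) :=
            Subtype.ext (by simp [smul_eq_mul])
          rw [this, map_add, map_add, map_smul, map_smul, hS, hS]
        have heq : a (γ + γ') * b (γ + γ') = a γ * (b γ + c * b γ') := by
          rw [← hab (γ + γ')]
          push_cast [Submodule.coe_add]
          rw [hab γ, hab γ', hc]; ring
        have := Lkey (a (γ + γ')) (hamem _) (b (γ + γ')) (hbmem _) _ (hS _ _)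
          (a γ) (hamem γ) (b γ + c * b γ') hβ _ hx' heq
        rw [hT]
        simp only
        rw [this, smul_add, smul_smul, ← hc]
      have haddT : ∀ γ γ' : m, T (γ + γ') = T γ + T γ' := by
        intro γ γ'
        rcases ValuationRing.dvd_total (a γ) (a γ') with hd | hd
        · exact hmain γ γ' hd
        · rw [add_comm γ γ', hmain γ' γ hd, add_comm]
      have hsmulT : ∀ (c : O) (γ : m), T (c • γ) = c • T γ := by
        intro c γ
        have hcb : c * b γ ∈ m := m.mul_mem_left c (hbmem γ)
        have hx' : f (c • S (b γ) (hbmem γ)) = h ⟨c * b γ, hcb⟩ := by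
          have : (⟨c * b γ, hcb⟩ : m) = c • (⟨b γ, hbmem γ⟩ : m) := Subtype.ext (by simp [smul_eq_mul])
          rw [this, map_smul, map_smul, hS]
        have heq : a (c • γ) * b (c • γ) = a γ * (c * b γ) := by
          rw [← hab (c • γ)]
          have : ((c • γ : m) : O) = c * (γ : O) := by simp [smul_eq_mul]
          rw [this, hab γ]; ring
        have := Lkey (a (c • γ)) (hamem _) (b (c • γ)) (hbmem _) _ (hS _ _)
          (a γ) (hamem γ) (c * b γ) hcb _ hx' heq
        rw [hT]
        simp only
        rw [this, smul_comm]
      refine ⟨⟨⟨T, haddT⟩, fun c γ => hsmulT c γ⟩, ?_⟩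
      ext γ
      exact hfT γ
  · intro hb
    constructor
    · intro γ hγ x hx
      set g : m →ₗ[O] M := (LinearMap.toSpanSingleton O M x).comp m.subtype with hg
      have h0 : f ∘ₗ g = f ∘ₗ (0 : m →ₗ[O] M) := by
        ext δ
        simp only [hg, LinearMap.comp_apply, LinearMap.toSpanSingleton_apply,
          Submodule.coe_subtype, map_smul, LinearMap.zero_apply, map_zero]
        rw [LinearMap.mem_ker.mp hx, smul_zero]
      have : g = 0 := hb.1 h0
      have := LinearMap.congr_fun this ⟨γ, hγ⟩
      simpa [hg, LinearMap.toSpanSingleton_apply] using this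
    · intro γ hγ y
      obtain ⟨g, hgy⟩ := hb.2 ((LinearMap.toSpanSingleton O N y).comp m.subtype)
      have := LinearMap.congr_fun hgy ⟨γ, hγ⟩
      simp only [LinearMap.comp_apply, Submodule.coe_subtype,
        LinearMap.toSpanSingleton_apply] at this
      exact ⟨g ⟨γ, hγ⟩, this⟩
end

section
/- Let f : M → N be a morphism of O-modules. Then f is an α-isomorphism if and only if the induced map m ⊗_O M → m ⊗_O N is an isomorphism. -/
/-!
Since `m` is flat, tensoring `0 → ker f → M → N → coker f → 0` with `m` keeps it exact, so
`m ⊗ f` is bijective iff `m ⊗ ker f` and `m ⊗ coker f` vanish. For an idempotent ideal `m`,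
`m ⊗ K = 0` iff `m K = 0`: every `γ ∈ m` is a sum of products `a b` with `a, b ∈ m`, and
`a b ⊗ x = b ⊗ a x`.
-/

universe u

open IsLocalRing TensorProduct

section

variable {R : Type*} [CommRing R] {A B : Type*} [AddCommGroup A] [Module R A]
  [AddCommGroup B] [Module R B]

lemma LinearMap.eq_zero_iff_subsingleton_of_injective {g : A →ₗ[R] B}
    (hg : Function.Injective g) : g = 0 ↔ Subsingleton A :=
  ⟨fun h ↦ ⟨fun a b ↦ hg (by simp [h])⟩, fun _ ↦ ext fun a ↦ by simp [Subsingleton.elim a 0]⟩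

lemma LinearMap.eq_zero_iff_subsingleton_of_surjective {g : A →ₗ[R] B}
    (hg : Function.Surjective g) : g = 0 ↔ Subsingleton B := by
  refine ⟨fun h ↦ ⟨fun a b ↦ ?_⟩, fun _ ↦ Subsingleton.elim _ _⟩
  obtain ⟨a, rfl⟩ := hg a
  obtain ⟨b, rfl⟩ := hg b
  simp [h]

variable (F : Type*) [AddCommGroup F] [Module R F] (f : A →ₗ[R] B)

lemma LinearMap.lTensor_injective_iff_subsingleton_ker [Module.Flat R F] :
    Function.Injective (f.lTensor F) ↔ Subsingleton (F ⊗[R] LinearMap.ker f) := by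
  rw [LinearMap.injective_iff_eq_zero_of_exact
      (Module.Flat.lTensor_exact F (LinearMap.exact_subtype_ker_map f)),
    LinearMap.eq_zero_iff_subsingleton_of_injective
      (Module.Flat.lTensor_preserves_injective_linearMap _ (Submodule.injective_subtype _))]

lemma LinearMap.lTensor_surjective_iff_subsingleton_coker :
    Function.Surjective (f.lTensor F) ↔ Subsingleton (F ⊗[R] (B ⧸ LinearMap.range f)) := by
  rw [LinearMap.surjective_iff_eq_zero_of_exact
      (lTensor_exact F (LinearMap.exact_map_mkQ_range f) (Submodule.mkQ_surjective _)),
    LinearMap.eq_zero_iff_subsingleton_of_surjective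
      (LinearMap.lTensor_surjective F (Submodule.mkQ_surjective _))]

end

lemma Ideal.subsingleton_tensor_iff_of_mul_self {R : Type*} [CommRing R] {I : Ideal R}
    (hI : I * I = I) (K : Type*) [AddCommGroup K] [Module R K] :
    Subsingleton (I ⊗[R] K) ↔ ∀ γ ∈ I, ∀ x : K, γ • x = 0 := by
  constructor
  · intro _ γ hγ x
    have := congrArg (TensorProduct.lid R K ∘ I.subtype.rTensor K)
      (Subsingleton.elim ((⟨γ, hγ⟩ : I) ⊗ₜ[R] x) 0)
    simpa using this
  · intro hK
    suffices ∀ γ : I, ∀ x : K, γ ⊗ₜ[R] x = 0 by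
      refine subsingleton_of_forall_eq 0 fun z ↦ ?_
      induction z using TensorProduct.induction_on with
      | zero => rfl
      | tmul γ x => exact this γ x
      | add z w hz hw => rw [hz, hw, add_zero]
    intro γ x
    let φ := (TensorProduct.mk R I K).flip x
    have hle : I * I ≤ (LinearMap.ker φ).map I.subtype := by
      refine Submodule.mul_le.mpr fun a ha b hb ↦ ⟨a • ⟨b, hb⟩, ?_, rfl⟩
      change (a • ⟨b, hb⟩ : I) ⊗ₜ[R] x = 0
      rw [TensorProduct.smul_tmul, hK a ha, TensorProduct.tmul_zero]
    obtain ⟨γ', hγ', hγγ'⟩ := hle (hI.ge γ.2)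
    rwa [← Subtype.ext hγγ']

lemma isAlphaIso_iff_smul_ker_coker_eq_zero {R : Type u} [CommRing R] (I : Ideal R)
    {M N : Type u} [AddCommGroup M] [Module R M] [AddCommGroup N] [Module R N]
    (f : M →ₗ[R] N) :
    IsAlphaIso I f ↔ (∀ γ ∈ I, ∀ x : LinearMap.ker f, γ • x = 0) ∧
      ∀ γ ∈ I, ∀ y : N ⧸ LinearMap.range f, γ • y = 0 := by
  refine and_congr ?_ ?_
  · exact ⟨fun h γ hγ x ↦ Subtype.ext (h γ hγ x x.2),
      fun h γ hγ x hx ↦ congrArg Subtype.val (h γ hγ ⟨x, hx⟩)⟩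
  · simp only [Submodule.Quotient.forall, ← Submodule.Quotient.mk_smul,
      Submodule.Quotient.mk_eq_zero]

theorem isAlphaIso_iff_tensor_bijective
    (O : Type u) [CommRing O] [IsDomain O] [ValuationRing O]
    (hflat : Module.Flat O (maximalIdeal O))
    (hidem : maximalIdeal O * maximalIdeal O = maximalIdeal O)
    (M N : Type u) [AddCommGroup M] [Module O M] [AddCommGroup N] [Module O N]
    (f : M →ₗ[O] N) :
    IsAlphaIso (maximalIdeal O) f ↔
      Function.Bijective (LinearMap.lTensor (maximalIdeal O) f) := by
  have := hflat
  rw [isAlphaIso_iff_smul_ker_coker_eq_zero, Function.Bijective,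
    LinearMap.lTensor_injective_iff_subsingleton_ker,
    LinearMap.lTensor_surjective_iff_subsingleton_coker,
    Ideal.subsingleton_tensor_iff_of_mul_self hidem,
    Ideal.subsingleton_tensor_iff_of_mul_self hidem]
end

section
/- For every integer i ≥ 0, the functor Ext^i_O(m, −) on O-modules sends α-isomorphisms to isomorphisms. In particular, if P is an α-null O-module then Ext^i_O(m, P) = 0 for all i ≥ 0. -/
/-!
`O` is the valuation ring of the `p`-adic completion of an algebraic closure of `ℚ_p`,
encoded abstractly as a valuation ring (local domain) with idempotent maximal ideal `m`.
The statement: for every `i ≥ 0` the functor `Ext^i_O(m, −)` sends α-isomorphisms to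
isomorphisms; in particular if `P` is α-null then `Ext^i_O(m, P) = 0`.
-/

universe u

open IsLocalRing CategoryTheory Opposite

/-- An `O`-module is α-null (w.r.t. the ideal `m`) if it is annihilated by every element
of `m`. -/
def IsAlphaNull {O : Type u} [CommRing O] (m : Ideal O)
    (P : Type u) [AddCommGroup P] [Module O P] : Prop :=
  ∀ γ ∈ m, ∀ x : P, γ • x = 0

/-- The functor `Ext^i_O(m, -)` on `O`-modules. -/
noncomputable def extMaximalIdeal (O : Type u) [CommRing O] [IsDomain O] [ValuationRing O]
    (i : ℕ) : ModuleCat.{u} O ⥤ ModuleCat.{u} O :=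
  (Ext O (ModuleCat.{u} O) i).obj (op (ModuleCat.of O (maximalIdeal O)))

/-!
Let `P → m` be a projective resolution, so that `Ext^i(m, Y)` is the cohomology of `Hom(P, Y)`.
If `Y` is α-null, a map `P_n → Y` is the same as a map of `k`-vector spaces `P_n / m P_n → Y`,
`k` the residue field. Over a valuation ring every element of `m M` has the form `c • y` with
`c ∈ m`, so a submodule `K ≤ B` with torsion-free quotient satisfies `m B ∩ K = m K`: the map
`K / m K → B / m B` is injective and therefore split. Applied to the image of each differential,
this extends every cocycle of `Hom(P, Y)` along the differential; in degree `0` a cocycle factors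
through `m = m • m`, on which every map to `Y` vanishes. Hence `Hom(P, Y)` is acyclic.
An α-isomorphism is a surjection with α-null kernel followed by an injection with α-null
cokernel, and the long exact cohomology sequences of `Hom(P, -)` turn both into isomorphisms.
-/

section AlphaNull

variable {O : Type u} [CommRing O] {I : Ideal O} {Q : Type*} {Y : Type u} [AddCommGroup Q]
  [Module O Q] [AddCommGroup Y] [Module O Y]

theorem IsAlphaNull.smul_top_le_ker (hY : IsAlphaNull I Y) (f : Q →ₗ[O] Y) :
    I • ⊤ ≤ LinearMap.ker f :=
  Submodule.smul_le.2 fun c hc y _ => by rw [LinearMap.mem_ker, map_smul, hY c hc]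

theorem LinearMap.eq_zero_of_isAlphaNull (hQ : I • (⊤ : Submodule O Q) = ⊤)
    (hY : IsAlphaNull I Y) (f : Q →ₗ[O] Y) : f = 0 :=
  LinearMap.ker_eq_top.1 (top_le_iff.1 (hQ ▸ hY.smul_top_le_ker f))

theorem IsAlphaIso.isAlphaNull_quotient_range {M : Type u} [AddCommGroup M] [Module O M]
    {f : M →ₗ[O] Y} (hf : IsAlphaIso I f) : IsAlphaNull I (Y ⧸ LinearMap.range f) := by
  intro γ hγ y
  obtain ⟨y, rfl⟩ := Submodule.Quotient.mk_surjective _ y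
  rw [← Submodule.Quotient.mk_smul, Submodule.Quotient.mk_eq_zero]
  exact hf.2 γ hγ y

end AlphaNull

theorem Ideal.smul_top_eq_top_of_mul_self_eq {R : Type*} [CommRing R] {I : Ideal R}
    (h : I * I = I) : I • (⊤ : Submodule R I) = ⊤ := by
  apply Submodule.map_injective_of_injective I.injective_subtype
  rw [Submodule.map_smul'', Submodule.map_top, Submodule.range_subtype, smul_eq_mul, h]

section ValuationRing

open Module Submodule

variable {O : Type u} [CommRing O] [IsDomain O] [ValuationRing O]

theorem ValuationRing.exists_smul_eq_of_mem_smul_top {M : Type*} [AddCommGroup M] [Module O M]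
    {I : Ideal O} {x : M} (hx : x ∈ I • (⊤ : Submodule O M)) : ∃ c ∈ I, ∃ y : M, c • y = x := by
  refine smul_induction_on hx (fun c hc y _ => ⟨c, hc, y, rfl⟩) ?_
  rintro _ _ ⟨c₁, hc₁, y₁, rfl⟩ ⟨c₂, hc₂, y₂, rfl⟩
  rcases ValuationRing.dvd_total c₁ c₂ with ⟨d, rfl⟩ | ⟨d, rfl⟩
  · exact ⟨c₁, hc₁, y₁ + d • y₂, by rw [smul_add, mul_smul]⟩
  · exact ⟨c₂, hc₂, d • y₁ + y₂, by rw [smul_add, mul_smul]⟩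

theorem ValuationRing.smul_top_inf_le_smul {M : Type*} [AddCommGroup M] [Module O M]
    (I : Ideal O) (K : Submodule O M) [IsTorsionFree O (M ⧸ K)] : I • ⊤ ⊓ K ≤ I • K := by
  rintro x ⟨hx, hxK⟩
  obtain ⟨c, hc, y, rfl⟩ := ValuationRing.exists_smul_eq_of_mem_smul_top hx
  have : c • K.mkQ y = 0 := by rwa [← map_smul, mkQ_apply, Quotient.mk_eq_zero]
  rcases smul_eq_zero.1 this with rfl | hy
  · simp
  · exact smul_mem_smul hc ((Quotient.mk_eq_zero K).1 hy)

variable {A B T : Type*} {Y : Type u} [AddCommGroup A] [Module O A] [AddCommGroup B]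
  [Module O B] [AddCommGroup T] [Module O T] [AddCommGroup Y] [Module O Y]

theorem exists_extend_of_isAlphaNull (K : Submodule O B) [IsTorsionFree O (B ⧸ K)]
    (hY : IsAlphaNull (maximalIdeal O) Y) (φ : K →ₗ[O] Y) :
    ∃ ψ : B →ₗ[O] Y, ψ ∘ₗ K.subtype = φ := by
  set m := maximalIdeal O
  let : Field (O ⧸ m) := Ideal.Quotient.field m
  let j : (K ⧸ m • (⊤ : Submodule O K)) →ₗ[O] B ⧸ m • (⊤ : Submodule O B) :=
    mapQ _ _ K.subtype (by
      rw [← map_le_iff_le_comap, map_smul'']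
      exact smul_mono_right _ le_top)
  have hj : LinearMap.ker (j.extendScalarsOfSurjective (Ideal.Quotient.mk_surjective (I := m)))
      = ⊥ := by
    refine LinearMap.ker_eq_bot'.2 fun x hx => ?_
    obtain ⟨x, rfl⟩ := Submodule.Quotient.mk_surjective _ x
    have hx' : (x : B) ∈ m • K :=
      ValuationRing.smul_top_inf_le_smul m K ⟨(Quotient.mk_eq_zero _).1 hx, x.2⟩
    rwa [Quotient.mk_eq_zero, mem_smul_top_iff]
  obtain ⟨r, hr⟩ := LinearMap.exists_leftInverse_of_injective _ hj
  refine ⟨(m • (⊤ : Submodule O K)).liftQ φ (hY.smul_top_le_ker φ) ∘ₗ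
    r.restrictScalars O ∘ₗ (m • (⊤ : Submodule O B)).mkQ, LinearMap.ext fun x => ?_⟩
  have hrx : r (Submodule.Quotient.mk (x : B)) = Submodule.Quotient.mk x :=
    LinearMap.congr_fun hr (Submodule.Quotient.mk x)
  simp [hrx]

theorem exists_comp_eq_of_isAlphaNull {g : A →ₗ[O] B} {h : B →ₗ[O] T} [IsTorsionFree O T]
    (hgh : Function.Exact g h) (hY : IsAlphaNull (maximalIdeal O) Y) (φ : A →ₗ[O] Y)
    (hφ : LinearMap.ker g ≤ LinearMap.ker φ) : ∃ ψ : B →ₗ[O] Y, ψ ∘ₗ g = φ := by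
  have : IsTorsionFree O (B ⧸ LinearMap.range g) := by
    let h' := (LinearMap.range g).liftQ h (hgh.linearMap_ker_eq ▸ le_rfl)
    refine (LinearMap.ker_eq_bot.1 ?_).moduleIsTorsionFree h' (map_smul h')
    exact ker_liftQ_eq_bot' _ _ hgh.linearMap_ker_eq.symm
  obtain ⟨ψ, hψ⟩ := exists_extend_of_isAlphaNull (LinearMap.range g) hY
    ((LinearMap.ker g).liftQ φ hφ ∘ₗ g.quotKerEquivRange.symm.toLinearMap)
  refine ⟨ψ, LinearMap.ext fun a => ?_⟩
  have := LinearMap.congr_fun hψ ⟨g a, LinearMap.mem_range_self g a⟩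
  simpa [LinearMap.quotKerEquivRange_symm_apply_image] using this

end ValuationRing

namespace CategoryTheory.ShortComplex.ShortExact

open HomologicalComplex

variable {C ι : Type*} [Category C] [Abelian C] {c : ComplexShape ι}
  {S : ShortComplex (HomologicalComplex C c)}

theorem quasiIso_g (hS : S.ShortExact) (h₁ : S.X₁.Acyclic) : _root_.QuasiIso S.g := by
  have hzero (j : ι) := (h₁ j).isZero_homology
  refine ⟨fun i => (quasiIsoAt_iff_isIso_homologyMap _ _).2 ?_⟩
  have : Mono (HomologicalComplex.homologyMap S.g i) :=
    (hS.homology_exact₂ i).mono_g ((hzero i).eq_of_src _ _)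
  have : Epi (HomologicalComplex.homologyMap S.g i) := by
    by_cases hi : ∃ j, c.Rel i j
    · obtain ⟨j, hij⟩ := hi
      exact (hS.homology_exact₃ i j hij).epi_f ((hzero j).eq_of_tgt _ _)
    · have := hS.epi_g
      exact epi_homologyMap_of_epi_of_not_rel S.g i (by simpa using hi)
  exact isIso_of_mono_of_epi _

theorem quasiIso_f (hS : S.ShortExact) (h₃ : S.X₃.Acyclic) : _root_.QuasiIso S.f := by
  have hzero (j : ι) := (h₃ j).isZero_homology
  refine ⟨fun i => (quasiIsoAt_iff_isIso_homologyMap _ _).2 ?_⟩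
  have : Epi (HomologicalComplex.homologyMap S.f i) :=
    (hS.homology_exact₂ i).epi_f ((hzero i).eq_of_tgt _ _)
  have : Mono (HomologicalComplex.homologyMap S.f i) := by
    by_cases hi : ∃ h, c.Rel h i
    · obtain ⟨h, hhi⟩ := hi
      exact (hS.homology_exact₁ h i hhi).mono_g ((hzero h).eq_of_src _ _)
    · have := hS.mono_f
      exact mono_homologyMap_of_mono_of_not_rel S.f i (by simpa using hi)
  exact isIso_of_mono_of_epi _

end CategoryTheory.ShortComplex.ShortExact

namespace ChainComplex

variable {C : Type*} [Category C] [Abelian C] (X : ChainComplex C ℕ) (R : Type*) [Ring R]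
  [Linear R C]

/-- In degree `j`, `(X.linearYoneda R).map g` is `φ ↦ φ ≫ g`. -/
noncomputable def linearYoneda : C ⥤ CochainComplex (ModuleCat R) ℕ where
  obj Y := X.linearYonedaObj R Y
  map g := (HomologicalComplex.unopFunctor _ _).map
    ((NatTrans.mapHomologicalComplex
      (NatTrans.rightOp ((CategoryTheory.linearYoneda R C).map g)) _).app X).op
  map_id _ := by ext j φ; exact Category.comp_id φ
  map_comp _ _ := by ext j φ; exact (Category.assoc _ _ _).symm

instance : (X.linearYoneda R).PreservesZeroMorphisms where
  map_zero _ _ := by ext j φ; exact Limits.comp_zero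

variable {X R} {Y : C}

theorem linearYonedaObj_exactAt_zero (h : ∀ φ : X.X 0 ⟶ Y, X.d 1 0 ≫ φ = 0 → φ = 0) :
    (X.linearYonedaObj R Y).ExactAt 0 := by
  rw [HomologicalComplex.exactAt_iff' _ 0 0 1 CochainComplex.prev_nat_zero
    ((ComplexShape.up ℕ).next_eq' rfl), ShortComplex.moduleCat_exact_iff]
  intro φ hφ
  exact ⟨0, by rw [map_zero, h φ hφ]; rfl⟩

theorem linearYonedaObj_exactAt_succ (n : ℕ)
    (h : ∀ φ : X.X (n + 1) ⟶ Y, X.d (n + 2) (n + 1) ≫ φ = 0 → ∃ ψ, X.d (n + 1) n ≫ ψ = φ) :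
    (X.linearYonedaObj R Y).ExactAt (n + 1) := by
  rw [HomologicalComplex.exactAt_iff' _ n (n + 1) (n + 2) (CochainComplex.prev_nat_succ n)
    ((ComplexShape.up ℕ).next_eq' rfl), ShortComplex.moduleCat_exact_iff]
  exact h

theorem shortExact_map_linearYoneda [∀ j, Projective (X.X j)] {S : ShortComplex C}
    (hS : S.ShortExact) : (S.map (X.linearYoneda R)).ShortExact := by
  have := hS.mono_f
  have := hS.epi_g
  refine HomologicalComplex.shortExact_of_degreewise_shortExact _ fun j => .mk' ?_ ?_ ?_
  · exact (ShortComplex.moduleCat_exact_iff _).2 fun φ hφ =>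
      ⟨hS.exact.lift φ hφ, hS.exact.lift_f φ hφ⟩
  · exact (ModuleCat.mono_iff_injective _).2 fun _ _ h => (cancel_mono S.f).1 h
  · exact (ModuleCat.epi_iff_surjective _).2 fun φ =>
      ⟨Projective.factorThru φ S.g, Projective.factorThru_comp φ S.g⟩

end ChainComplex

namespace CategoryTheory.ProjectiveResolution

section Ext

variable {C : Type*} [Category C] [Abelian C] [EnoughProjectives C] {R : Type*} [Ring R]
  [Linear R C] {Z Y Y' : C}

theorem isIso_ext_map (P : ProjectiveResolution Z) (g : Y ⟶ Y') (i : ℕ)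
    [QuasiIsoAt ((P.complex.linearYoneda R).map g) i] :
    IsIso (((Ext R C i).obj (op Z)).map g) := by
  let α := NatTrans.rightOp ((CategoryTheory.linearYoneda R C).map g)
  have : QuasiIsoAt ((NatTrans.mapHomologicalComplex α _).app P.complex) i :=
    (HomologicalComplex.quasiIsoAt_unopFunctor_map_iff _ i).1 ‹_›
  have : IsIso ((HomologicalComplex.homologyFunctor _ _ i).map
      ((NatTrans.mapHomologicalComplex α _).app P.complex)) :=
    (quasiIsoAt_iff_isIso_homologyMap _ _).1 this
  change IsIso ((NatTrans.leftDerived α i).app Z).unop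
  rw [leftDerived_app_eq α P i]
  infer_instance

end Ext

variable {O : Type u} [CommRing O] {Z : ModuleCat.{u} O} (P : ProjectiveResolution Z)

theorem isTorsionFree_complex_X (n : ℕ) : Module.IsTorsionFree O (P.complex.X n) :=
  have : Module.Projective O (P.complex.X n) :=
    (IsProjective.iff_projective (P.complex.X n)).2 (P.projective n)
  inferInstance

theorem exists_isTorsionFree_function_exact_d [Module.IsTorsionFree O Z] (n : ℕ) :
    ∃ (T : ModuleCat.{u} O) (_ : Module.IsTorsionFree O T) (h : P.complex.X n ⟶ T),
      Function.Exact (P.complex.d (n + 1) n) h := by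
  rcases n with _ | k
  · exact ⟨Z, inferInstance, P.π.f 0,
      (ShortComplex.ShortExact.moduleCat_exact_iff_function_exact _).1 P.exact₀⟩
  · exact ⟨P.complex.X k, P.isTorsionFree_complex_X k, P.complex.d (k + 1) k,
      (ShortComplex.ShortExact.moduleCat_exact_iff_function_exact _).1 (P.exact_succ k)⟩

variable [IsDomain O] [ValuationRing O] [Module.IsTorsionFree O Z]
  (hZ : maximalIdeal O • (⊤ : Submodule O Z) = ⊤)

include hZ

theorem acyclic_linearYonedaObj_of_isAlphaNull {Y : ModuleCat.{u} O}
    (hY : IsAlphaNull (maximalIdeal O) Y) : (P.complex.linearYonedaObj O Y).Acyclic := by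
  rintro (_ | n)
  · refine P.complex.linearYonedaObj_exactAt_zero fun φ hφ => ?_
    obtain ⟨l, rfl⟩ := Limits.CokernelCofork.IsColimit.desc' P.isColimitCokernelCofork φ hφ
    have hl : l = 0 := ModuleCat.hom_ext (LinearMap.eq_zero_of_isAlphaNull hZ hY l.hom)
    rw [hl, Limits.comp_zero]
  · refine P.complex.linearYonedaObj_exactAt_succ n fun φ hφ => ?_
    obtain ⟨T, _, h, hexact⟩ := P.exists_isTorsionFree_function_exact_d n
    have hφ' : LinearMap.ker (P.complex.d (n + 1) n).hom ≤ LinearMap.ker φ.hom := by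
      intro x hx
      obtain ⟨w, rfl⟩ := ((ShortComplex.ShortExact.moduleCat_exact_iff_function_exact _).1
        (P.exact_succ n) x).1 hx
      exact congr($hφ w)
    obtain ⟨ψ, hψ⟩ := exists_comp_eq_of_isAlphaNull hexact hY φ.hom hφ'
    exact ⟨ModuleCat.ofHom ψ, ModuleCat.hom_ext hψ⟩

theorem quasiIso_linearYoneda_map_of_isAlphaIso {M N : Type u} [AddCommGroup M] [Module O M]
    [AddCommGroup N] [Module O N] {f : M →ₗ[O] N} (hf : IsAlphaIso (maximalIdeal O) f) :
    QuasiIso ((P.complex.linearYoneda O).map (ModuleCat.ofHom f)) := by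
  have hker := LinearMap.shortExact_shortComplexKer f.surjective_rangeRestrict
  have hexact := LinearMap.exact_subtype_mkQ (LinearMap.range f)
  have hcoker := ModuleCat.shortComplex_shortExact
    (ModuleCat.shortComplexOfCompEqZero _ _ hexact.linearMap_comp_eq_zero)
    hexact (Submodule.injective_subtype _) (Submodule.mkQ_surjective _)
  have : QuasiIso ((P.complex.linearYoneda O).map (ModuleCat.ofHom f.rangeRestrict)) :=
    (ChainComplex.shortExact_map_linearYoneda hker).quasiIso_g
      (P.acyclic_linearYonedaObj_of_isAlphaNull hZ
        fun γ hγ x => Subtype.ext (hf.1 γ hγ x (by simpa using x.2)))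
  have : QuasiIso ((P.complex.linearYoneda O).map (ModuleCat.ofHom (LinearMap.range f).subtype)) :=
    (ChainComplex.shortExact_map_linearYoneda hcoker).quasiIso_f
      (P.acyclic_linearYonedaObj_of_isAlphaNull hZ hf.isAlphaNull_quotient_range)
  change QuasiIso ((P.complex.linearYoneda O).map
    (ModuleCat.ofHom f.rangeRestrict ≫ ModuleCat.ofHom (LinearMap.range f).subtype))
  rw [Functor.map_comp]
  infer_instance

end CategoryTheory.ProjectiveResolution

section ExtOfAlpha

variable {O : Type u} [CommRing O] [IsDomain O] [ValuationRing O] {Z : ModuleCat.{u} O}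
  [Module.IsTorsionFree O Z] (hZ : maximalIdeal O • (⊤ : Submodule O Z) = ⊤) (i : ℕ)

include hZ

theorem isIso_ext_map_of_isAlphaIso {M N : Type u} [AddCommGroup M] [Module O M]
    [AddCommGroup N] [Module O N] {f : M →ₗ[O] N} (hf : IsAlphaIso (maximalIdeal O) f) :
    IsIso (((Ext O (ModuleCat.{u} O) i).obj (op Z)).map (ModuleCat.ofHom f)) :=
  have := (projectiveResolution Z).quasiIso_linearYoneda_map_of_isAlphaIso hZ hf
  (projectiveResolution Z).isIso_ext_map _ i

theorem isZero_ext_of_isAlphaNull {Y : ModuleCat.{u} O} (hY : IsAlphaNull (maximalIdeal O) Y) :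
    Limits.IsZero (((Ext O (ModuleCat.{u} O) i).obj (op Z)).obj Y) :=
  (((projectiveResolution Z).acyclic_linearYonedaObj_of_isAlphaNull hZ hY) i).isZero_homology.of_iso
    ((projectiveResolution Z).isoExt i Y)

end ExtOfAlpha

theorem ext_maximalIdeal_sends_alphaIso_to_iso
    (O : Type u) [CommRing O] [IsDomain O] [ValuationRing O]
    (hidem : maximalIdeal O * maximalIdeal O = maximalIdeal O) (i : ℕ) :
    (∀ (M N : Type u) (_ : AddCommGroup M) (_ : Module O M) (_ : AddCommGroup N)
        (_ : Module O N) (f : M →ₗ[O] N), IsAlphaIso (maximalIdeal O) f →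
        IsIso ((extMaximalIdeal O i).map (ModuleCat.ofHom f))) ∧
      (∀ (P : Type u) (_ : AddCommGroup P) (_ : Module O P), IsAlphaNull (maximalIdeal O) P →
        Subsingleton ((extMaximalIdeal O i).obj (ModuleCat.of O P))) := by
  have hm := Ideal.smul_top_eq_top_of_mul_self_eq hidem
  exact ⟨fun M N _ _ _ _ f hf => isIso_ext_map_of_isAlphaIso hm i hf,
    fun P _ _ hP => ModuleCat.subsingleton_of_isZero (isZero_ext_of_isAlphaNull hm i hP)⟩
end

section
/- Let A be a commutative ring, f : M → N a morphism of A-modules, and γ ∈ A an element annihilating both the kernel and the cokernel of f. Then there exists an A-linear map g : N → M such that g ∘ f = γ^2 · id_M and f ∘ g = γ^2 · id_N. -/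
/-!
If `f : M → N` is a morphism of `A`-modules whose kernel and cokernel are annihilated by
`γ ∈ A`, then there exists `g : N → M` with `g ∘ f = γ² · id` and `f ∘ g = γ² · id`.
-/

universe u v w

theorem exists_quasi_inverse_of_annihilates_ker_coker
    (A : Type u) [CommRing A]
    (M : Type v) (N : Type w) [AddCommGroup M] [Module A M] [AddCommGroup N] [Module A N]
    (f : M →ₗ[A] N) (γ : A)
    (hker : ∀ x ∈ LinearMap.ker f, γ • x = 0)
    (hcoker : ∀ y : N, γ • y ∈ LinearMap.range f) :
    ∃ g : N →ₗ[A] M,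
      g ∘ₗ f = (γ ^ 2) • LinearMap.id ∧ f ∘ₗ g = (γ ^ 2) • LinearMap.id := by
  choose s hs using hcoker
  have key : ∀ x : M, ∀ y : N, f x = γ • y → γ • x = γ • s y := by
    intro x y hxy
    have : x - s y ∈ LinearMap.ker f := by
      simp [LinearMap.mem_ker, map_sub, hxy, hs]
    have h := hker _ this
    rw [smul_sub, sub_eq_zero] at h
    exact h
  refine ⟨{ toFun := fun y => γ • s y
            map_add' := fun y z => ?_
            map_smul' := fun a y => ?_ }, ?_, ?_⟩
  · show γ • s (y + z) = γ • s y + γ • s z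
    rw [← key (s y + s z) (y + z) (by simp [hs, smul_add])]
    simp [smul_add]
  · show γ • s (a • y) = a • (γ • s y)
    rw [← key (a • s y) (a • y) (by rw [map_smul, hs, smul_comm])]
    simp [smul_comm γ a]
  · ext x
    simpa [pow_two, mul_smul] using (key (γ • x) (f x) (by rw [map_smul])).symm
  · ext y
    simp [pow_two, mul_smul, hs]
end

section
/- Let p : A → A_0 be a surjection of commutative rings whose kernel I is of square zero (I^2 = 0). Let M_0 and J be A_0-modules. Then the sequence 0 → Ext^1_{A_0}(M_0, J) → Ext^1_A(M_0, J) → Hom_{A_0}(I ⊗_{A_0} M_0, J) is exact, where the first map is restriction of scalars and the second sends an extension 0 → J → M → M_0 → 0 of A-modules to the map I ⊗_{A_0} M_0 → J induced by the comparison of the two rows 0 → I⊗_A M → M → M⊗_A A_0 → 0 and 0 → J → M → M_0 → 0. -/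
/-!
Let `A` be a commutative ring, `I ⊆ A` an ideal of square zero, `A₀ = A/I`, and let `M₀`, `J`
be `A₀`-modules (i.e. `A`-modules killed by `I`).  The exact sequence
`0 → Ext¹_{A₀}(M₀, J) → Ext¹_A(M₀, J) → Hom_{A₀}(I ⊗_{A₀} M₀, J)` is expressed here on the
level of extensions: the first map is restriction of scalars, and the second associates to an
`A`-extension `0 → J → E → M₀ → 0` the unique map `u : I ⊗ M₀ → J` with
`ι(u(a ⊗ π(e))) = a • e` (note `I ⊗_{A₀} M₀ = I ⊗_A M₀` since `I² = 0`).  Exactness means: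
(0) `u` vanishes on extensions of `A₀`-modules (composition zero);
(1) an `A`-extension has `u = 0` iff its class comes from `Ext¹_{A₀}`, i.e. iff it is
    equivalent to an extension of `A₀`-modules;
(2) the first map is injective: `A₀`-extensions that become equivalent as `A`-extensions are
    equivalent as `A₀`-extensions.
-/

universe u

open TensorProduct

variable (A : Type u) [CommRing A]
variable (J M0 : Type u) [AddCommGroup J] [Module A J] [AddCommGroup M0] [Module A M0]

/-- An extension of `A`-modules `0 → J → E → M₀ → 0`. -/
structure ExtensionData where
  E : Type u
  [addE : AddCommGroup E]
  [modE : Module A E]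
  ι : J →ₗ[A] E
  π : E →ₗ[A] M0
  inj : Function.Injective ι
  surj : Function.Surjective π
  exact : LinearMap.range ι = LinearMap.ker π

attribute [instance] ExtensionData.addE ExtensionData.modE

namespace ExtensionData

variable {A J M0}

/-- The extension consists of `A/I`-modules. -/
def KilledBy (I : Ideal A) (X : ExtensionData A J M0) : Prop :=
  ∀ a ∈ I, ∀ e : X.E, a • e = 0

/-- The `A/I`-module structure on the middle term of an extension killed by `I`. -/
def quotModule (I : Ideal A) (X : ExtensionData A J M0) (h : X.KilledBy I) :
    Module (A ⧸ I) X.E :=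
  Module.IsTorsionBySet.module (fun x a => h a.1 a.2 x)

/-- `u0 : I ⊗ M₀ → J` is the map associated to the extension `X`, characterized by
`ι (u0 (a ⊗ π e)) = a • e`. -/
def UDesc (I : Ideal A) (X : ExtensionData A J M0) (u0 : ((I : Submodule A A) ⊗[A] M0) →ₗ[A] J) :
    Prop :=
  ∀ (a : I) (e : X.E), X.ι (u0 ((a : I) ⊗ₜ[A] X.π e)) = (a : A) • e

/-- Equivalence of extensions of `A`-modules. -/
def EquivExt (X Y : ExtensionData A J M0) : Prop :=
  ∃ φ : X.E ≃ₗ[A] Y.E, (∀ j, φ (X.ι j) = Y.ι j) ∧ (∀ e, Y.π (φ e) = X.π e)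

end ExtensionData

theorem deformation_low_degree_exact_sequence
    (I : Ideal A) (hI : I * I = ⊥)
    (hM0 : ∀ a ∈ I, ∀ x : M0, a • x = 0) (hJ : ∀ a ∈ I, ∀ x : J, a • x = 0) :
    -- (0) the composition `Ext¹_{A₀} → Ext¹_A → Hom_{A₀}(I ⊗ M₀, J)` is zero:
    (∀ X : ExtensionData A J M0, X.KilledBy I →
        ∀ u0, X.UDesc I u0 → u0 = 0) ∧
      -- (1) exactness at `Ext¹_A(M₀, J)`:
      (∀ (X : ExtensionData A J M0) (u0), X.UDesc I u0 →
        (u0 = 0 ↔ ∃ Y : ExtensionData A J M0, Y.KilledBy I ∧ X.EquivExt Y)) ∧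
      -- (2) injectivity of `Ext¹_{A₀}(M₀, J) → Ext¹_A(M₀, J)`:
      (∀ (X Y : ExtensionData A J M0) (hX : X.KilledBy I) (hY : Y.KilledBy I),
        X.EquivExt Y →
        letI := X.quotModule I hX
        letI := Y.quotModule I hY
        ∃ ψ : X.E ≃ₗ[A ⧸ I] Y.E, (∀ j, ψ (X.ι j) = Y.ι j) ∧ (∀ e, Y.π (ψ e) = X.π e)) := by
  have killed_u_zero : ∀ X : ExtensionData A J M0, X.KilledBy I →
      ∀ u0, X.UDesc I u0 → u0 = 0 := by
    intro X hX u0 hu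
    have : ∀ y : (I : Submodule A A) ⊗[A] M0, u0 y = 0 := by
      intro y
      induction y using TensorProduct.induction_on with
      | zero => simp
      | tmul a m =>
          obtain ⟨e, he⟩ := X.surj m
          apply X.inj
          rw [← he, hu a e, map_zero, hX a.1 a.2]
      | add y z hy hz => rw [map_add, hy, hz, add_zero]
    exact LinearMap.ext fun y => by simpa using this y
  refine ⟨killed_u_zero, ?_, ?_⟩
  · intro X u0 hu
    constructor
    · intro h0
      have hX : X.KilledBy I := by
        intro a ha e
        have := hu ⟨a, ha⟩ e
        rw [h0] at this
        simpa using this.symm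
      exact ⟨X, hX, LinearEquiv.refl A X.E, fun j => rfl, fun e => rfl⟩
    · rintro ⟨Y, hY, φ, hφι, hφπ⟩
      have hX : X.KilledBy I := by
        intro a ha e
        have : φ (a • e) = 0 := by rw [map_smul, hY a ha]
        simpa using φ.injective (by simpa using this)
      exact killed_u_zero X hX u0 hu
  · intro X Y hX hY ⟨φ, hφι, hφπ⟩
    letI := X.quotModule I hX
    letI := Y.quotModule I hY
    refine ⟨{ φ with map_smul' := ?_ }, hφι, hφπ⟩
    intro c x
    obtain ⟨a, rfl⟩ := Ideal.Quotient.mk_surjective c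
    show φ ((Ideal.Quotient.mk I a) • x) = (Ideal.Quotient.mk I a) • φ x
    have h1 : (Ideal.Quotient.mk I a) • x = a • x := rfl
    have h2 : (Ideal.Quotient.mk I a) • φ x = a • φ x := rfl
    rw [h1, h2, map_smul]
end

section
/- Let A be a commutative ring, I ⊂ A an ideal with I^2 = 0, A_0 = A/I. Let 0 → J → M → M_0 → 0 be an extension of A-modules with J and M_0 killed by I, such that the canonical map M ⊗_A A_0 → M_0 is an isomorphism. Then M is flat over A if and only if M_0 is flat over A_0 and the induced map u : I ⊗_{A_0} M_0 → J (given by the multiplication I × M → J) is an isomorphism. -/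
/-!
Since `I² = 0`, the ideals `b ≤ I`, the quotient `A ⧸ I` and its `A`-submodules are all killed
by `I`, and for any `N` killed by `I` the map `N ⊗ E → N ⊗ M₀` is an isomorphism because
`ker π = I E`. Hence `I ⊗ E → E` is `ι ∘ u ∘ (I ⊗ π)`, and for an injection `N → P` of modules
killed by `I`, injectivity of `N ⊗ E → P ⊗ E` becomes injectivity of `N ⊗ M₀ → P ⊗ M₀`, which
holds when `M₀` is flat over `A ⧸ I`. For an arbitrary ideal `a` with image `a₀` in `A ⧸ I`, the
right exact sequence `(a ⊓ I) ⊗ E → a ⊗ E → a₀ ⊗ E → 0` reduces injectivity of `a ⊗ E → E` to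
the case of `a ⊓ I ≤ I` and to injectivity of `a₀ ⊗ E → (A ⧸ I) ⊗ E`.
Conversely, if `E` is flat then so is its base change `M₀ ≅ (A ⧸ I) ⊗ E`, and `u` is injective
because `I ⊗ E → E` is; `u` is always surjective since `ι J = I E`.
-/

universe u

open TensorProduct LinearMap

theorem Module.Flat.iff_lift_lsmul_comp_subtype_injective' {R M : Type*} [CommRing R]
    [AddCommGroup M] [Module R M] :
    Module.Flat R M ↔ ∀ I : Ideal R, Function.Injective (lift ((lsmul R M).comp I.subtype)) := by
  simp [Module.Flat.iff_rTensor_injective', ← lid_comp_rTensor]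

theorem LinearMap.injective_of_exact_of_injective_comp {R X' X X'' Y Z : Type*} [CommRing R]
    [AddCommGroup X'] [Module R X'] [AddCommGroup X] [Module R X] [AddCommGroup X'']
    [Module R X''] [AddCommGroup Y] [Module R Y] [AddCommGroup Z] [Module R Z]
    {g : X' →ₗ[R] X} {h : X →ₗ[R] X''} (hgh : Function.Exact g h) {f : X →ₗ[R] Y}
    (hfg : Function.Injective (f ∘ₗ g)) {q : Y →ₗ[R] Z} {Φ : X'' →ₗ[R] Z}
    (hΦ : Function.Injective Φ) (hcomm : q ∘ₗ f = Φ ∘ₗ h) : Function.Injective f := by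
  rw [← ker_eq_bot, eq_bot_iff]
  intro x hx
  have hhx : h x = 0 := hΦ <| by
    rw [map_zero, ← comp_apply, ← hcomm, comp_apply, mem_ker.mp hx, map_zero]
  obtain ⟨y, rfl⟩ := (hgh x).mp hhx
  have hy : y = 0 := hfg <| by simpa using hx
  simp [hy]

theorem Submodule.ker_eq_of_injective_liftQ {R M N : Type*} [CommRing R]
    [AddCommGroup M] [Module R M] [AddCommGroup N] [Module R N] (p : Submodule R M)
    (f : M →ₗ[R] N) (h : p ≤ ker f) (hf : Function.Injective (p.liftQ f h)) : ker f = p := by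
  refine le_antisymm (fun x hx => ?_) h
  rw [← Submodule.Quotient.mk_eq_zero]
  exact hf (by simpa using hx)

section SurjectiveBaseChange

variable {R S M N P : Type*} [CommRing R] [CommRing S] [Algebra R S]
  [AddCommGroup M] [Module R M] [Module S M] [IsScalarTower R S M]
  [AddCommGroup N] [Module R N] [Module S N] [IsScalarTower R S N]
  [AddCommGroup P] [Module R P] [Module S P] [IsScalarTower R S P]

theorem LinearMap.rTensor_injective_of_flat_of_algebraMap_surjective [Module.Flat S M]
    (hRS : Function.Surjective (algebraMap R S)) {f : N →ₗ[R] P} (hf : Function.Injective f) :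
    Function.Injective (f.rTensor M) := by
  have := CompatibleSMul.of_algebraMap_surjective (M := N) (N := M) hRS
  have := CompatibleSMul.of_algebraMap_surjective (M := P) (N := M) hRS
  let eN := equivOfCompatibleSMul R S R N M
  let eP := equivOfCompatibleSMul R S R P M
  have hfS : Function.Injective ((f.extendScalarsOfSurjective hRS).rTensor M) :=
    Module.Flat.rTensor_preserves_injective_linearMap _ hf
  have hcomm : f.rTensor M = eP.toLinearMap ∘ₗ
      ((f.extendScalarsOfSurjective hRS).rTensor M).restrictScalars R ∘ₗ eN.symm.toLinearMap :=
    TensorProduct.ext' fun _ _ => rfl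
  rw [hcomm]
  exact eP.injective.comp (hfS.comp eN.symm.injective)

end SurjectiveBaseChange

namespace Module.IsTorsionBySet

variable {R M N P E : Type*} [CommRing R] {I : Ideal R}
  [AddCommGroup M] [Module R M] [AddCommGroup N] [Module R N] [AddCommGroup P] [Module R P]
  [AddCommGroup E] [Module R E]

theorem rTensor_injective_of_flat (hM : IsTorsionBySet R M I) (hN : IsTorsionBySet R N I)
    (hP : IsTorsionBySet R P I) (hflat : letI := hM.module; Module.Flat (R ⧸ I) M)
    {f : N →ₗ[R] P} (hf : Function.Injective f) : Function.Injective (f.rTensor M) := by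
  let := hM.module
  let := hN.module
  let := hP.module
  have := hM.isScalarTower (S := R)
  have := hN.isScalarTower (S := R)
  have := hP.isScalarTower (S := R)
  exact f.rTensor_injective_of_flat_of_algebraMap_surjective
    (Ideal.Quotient.mk_surjective (I := I)) hf

theorem tmul_eq_zero_of_mem_smul_top (hN : IsTorsionBySet R N I) (n : N) {e : E}
    (he : e ∈ I • (⊤ : Submodule R E)) : n ⊗ₜ[R] e = 0 := by
  refine Submodule.smul_induction_on he (fun r hr e _ => ?_) fun e e' he he' => ?_
  · rw [← smul_tmul, @hN n ⟨r, hr⟩, zero_tmul]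
  · rw [tmul_add, he, he', add_zero]

theorem lTensor_bijective (hN : IsTorsionBySet R N I) {π : E →ₗ[R] M}
    (hπ : Function.Surjective π) (hker : ker π = I • ⊤) : Function.Bijective (π.lTensor N) := by
  refine ⟨?_, lTensor_surjective N hπ⟩
  have hzero : (ker π).subtype.lTensor N = 0 :=
    TensorProduct.ext' fun n e => hN.tmul_eq_zero_of_mem_smul_top n (hker ▸ e.2)
  rw [← ker_eq_bot, (lTensor_exact N (exact_subtype_ker_map π) hπ).linearMap_ker_eq, hzero,
    range_zero]

theorem rTensor_injective_of_ker_eq_smul_top (hM : IsTorsionBySet R M I)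
    (hN : IsTorsionBySet R N I) (hP : IsTorsionBySet R P I)
    (hflat : letI := hM.module; Module.Flat (R ⧸ I) M) {π : E →ₗ[R] M}
    (hπ : Function.Surjective π) (hker : ker π = I • ⊤) {f : N →ₗ[R] P}
    (hf : Function.Injective f) : Function.Injective (f.rTensor E) := by
  have hsquare : π.lTensor P ∘ₗ f.rTensor E = f.rTensor M ∘ₗ π.lTensor N := by
    rw [lTensor_comp_rTensor, rTensor_comp_lTensor]
  refine Function.Injective.of_comp (f := π.lTensor P) ?_
  rw [← coe_comp, hsquare, coe_comp]
  exact (hM.rTensor_injective_of_flat hN hP hflat hf).comp (hN.lTensor_bijective hπ hker).1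

end Module.IsTorsionBySet

theorem Ideal.lift_lsmul_comp_subtype_comp_rTensor_inclusion {R E : Type*} [CommRing R]
    [AddCommGroup E] [Module R E] {a b : Ideal R} (h : a ≤ b) :
    lift ((lsmul R E).comp b.subtype) ∘ₗ (Submodule.inclusion h).rTensor E =
      lift ((lsmul R E).comp a.subtype) :=
  TensorProduct.ext' fun _ _ => rfl

theorem Ideal.isTorsionBySet_of_le_of_mul_eq_bot {R : Type*} [CommRing R] {I a : Ideal R}
    (hI : I * I = ⊥) (hle : a ≤ I) : Module.IsTorsionBySet R a I := fun x r => Subtype.ext <| by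
  simpa [hI] using Ideal.mul_mem_mul r.2 (hle x.2)

theorem Ideal.Quotient.isTorsionBySet {R : Type*} [CommRing R] (I : Ideal R) :
    Module.IsTorsionBySet R (R ⧸ I) I := fun x r => by
  rw [Algebra.smul_def, Ideal.Quotient.algebraMap_eq, Ideal.Quotient.eq_zero_iff_mem.mpr r.2,
    zero_mul]

theorem Ideal.exact_inclusion_inf_submoduleMap_mkₐ {R : Type*} [CommRing R] (a I : Ideal R) :
    Function.Exact (Submodule.inclusion (inf_le_left : a ⊓ I ≤ a))
      ((Ideal.Quotient.mkₐ R I).toLinearMap.submoduleMap a) := by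
  intro z
  simp [Subtype.ext_iff, Ideal.Quotient.eq_zero_iff_mem]

section SquareZero

variable {A M0 E : Type*} [CommRing A] {I : Ideal A} [AddCommGroup M0] [Module A M0]
  [AddCommGroup E] [Module A E] {π : E →ₗ[A] M0}

theorem Module.Flat.quotient_of_bijective_liftQ [Module.Flat A E]
    (hM : Module.IsTorsionBySet A M0 I) (h : I • ⊤ ≤ ker π)
    (hπ : Function.Bijective ((I • ⊤ : Submodule A E).liftQ π h)) :
    letI := hM.module; Module.Flat (A ⧸ I) M0 := by
  let := hM.module
  have := hM.isScalarTower (S := A)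
  let e := (quotTensorEquivQuotSMul E I).trans (LinearEquiv.ofBijective _ hπ)
  exact Module.Flat.of_linearEquiv (e.extendScalarsOfSurjective Ideal.Quotient.mk_surjective).symm

theorem injective_lift_lsmul_comp_subtype_of_le (hI : I * I = ⊥)
    (hM : Module.IsTorsionBySet A M0 I) (hflat : letI := hM.module; Module.Flat (A ⧸ I) M0)
    (hπ : Function.Surjective π) (hker : ker π = I • ⊤)
    (hmul : Function.Injective (lift ((lsmul A E).comp I.subtype))) {a : Ideal A} (hle : a ≤ I) :
    Function.Injective (lift ((lsmul A E).comp a.subtype)) := by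
  rw [← Ideal.lift_lsmul_comp_subtype_comp_rTensor_inclusion hle, coe_comp]
  exact hmul.comp <| hM.rTensor_injective_of_ker_eq_smul_top
    (Ideal.isTorsionBySet_of_le_of_mul_eq_bot hI hle)
    (Ideal.isTorsionBySet_of_le_of_mul_eq_bot hI le_rfl) hflat hπ hker
    (Submodule.inclusion_injective hle)

theorem Module.Flat.of_injective_lift_lsmul_of_flat_quotient (hI : I * I = ⊥)
    (hM : Module.IsTorsionBySet A M0 I) (hflat : letI := hM.module; Module.Flat (A ⧸ I) M0)
    (hπ : Function.Surjective π) (hker : ker π = I • ⊤)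
    (hmul : Function.Injective (lift ((lsmul A E).comp I.subtype))) : Module.Flat A E := by
  refine Module.Flat.iff_lift_lsmul_comp_subtype_injective'.mpr fun a => ?_
  let a₀ : Submodule A (A ⧸ I) := Submodule.map (Ideal.Quotient.mkₐ A I).toLinearMap a
  have ha₀ : Module.IsTorsionBySet A a₀ I := fun x r =>
    Subtype.ext (Ideal.Quotient.isTorsionBySet I (x := x.1) (a := r))
  refine injective_of_exact_of_injective_comp
    (_root_.rTensor_exact E (Ideal.exact_inclusion_inf_submoduleMap_mkₐ a I)
      (submoduleMap_surjective _ a))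
    (q := TensorProduct.mk A (A ⧸ I) E 1) (Φ := a₀.subtype.rTensor E) ?_ ?_ ?_
  · rw [Ideal.lift_lsmul_comp_subtype_comp_rTensor_inclusion]
    exact injective_lift_lsmul_comp_subtype_of_le hI hM hflat hπ hker hmul inf_le_right
  · exact hM.rTensor_injective_of_ker_eq_smul_top ha₀ (Ideal.Quotient.isTorsionBySet I) hflat hπ
      hker Subtype.val_injective
  · refine TensorProduct.ext' fun z e => ?_
    simp [smul_tmul', Algebra.smul_def]

theorem surjective_of_range_eq_smul_top {J : Type*} [AddCommGroup J] [Module A J]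
    {ι : J →ₗ[A] E} {u : I ⊗[A] M0 →ₗ[A] J} (hι : Function.Injective ι)
    (hrange : range ι = I • ⊤) (hu : ∀ (a : I) (e : E), ι (u (a ⊗ₜ[A] π e)) = (a : A) • e) :
    Function.Surjective u := by
  intro j
  have hle : I • ⊤ ≤ range (ι ∘ₗ u) :=
    Submodule.smul_le.mpr fun c hc e _ => ⟨⟨c, hc⟩ ⊗ₜ π e, hu ⟨c, hc⟩ e⟩
  obtain ⟨t, ht⟩ := hle (hrange ▸ mem_range_self ι j)
  exact ⟨t, hι ht⟩

end SquareZero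

theorem flat_iff_of_squareZero_extension
    (A : Type u) [CommRing A] (I : Ideal A) (hI : I * I = ⊥)
    (M0 J E : Type u) [AddCommGroup M0] [Module A M0] [AddCommGroup J] [Module A J]
    [AddCommGroup E] [Module A E]
    (hM0 : ∀ a ∈ I, ∀ x : M0, a • x = 0)
    (ι : J →ₗ[A] E) (π : E →ₗ[A] M0)
    (hinj : Function.Injective ι) (hsurj : Function.Surjective π)
    (hexact : LinearMap.range ι = LinearMap.ker π)
    -- the canonical map `E ⊗_A A₀ = E/IE → M₀` is an isomorphism:
    (hcan : Function.Bijective (Submodule.liftQ (I • (⊤ : Submodule A E)) π (by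
      rw [Submodule.smul_le]
      rintro a ha e -
      rw [LinearMap.mem_ker, map_smul]
      exact hM0 a ha _)))
    -- the map `u : I ⊗ M₀ → J` induced by multiplication `I × E → J`:
    (u0 : ((I : Submodule A A) ⊗[A] M0) →ₗ[A] J)
    (hu0 : ∀ (a : I) (e : E), ι (u0 ((a : I) ⊗ₜ[A] π e)) = (a : A) • e) :
    Module.Flat A E ↔
      ((letI : Module (A ⧸ I) M0 :=
          Module.IsTorsionBySet.module (fun x a => hM0 a.1 a.2 x)
        Module.Flat (A ⧸ I) M0) ∧ Function.Bijective u0) := by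
  have hM : Module.IsTorsionBySet A M0 I := fun x a => hM0 a.1 a.2 x
  have hker : ker π = I • ⊤ := Submodule.ker_eq_of_injective_liftQ _ π _ hcan.1
  have hmul : lift ((lsmul A E).comp I.subtype) = ι ∘ₗ u0 ∘ₗ π.lTensor I :=
    TensorProduct.ext' fun a e => (hu0 a e).symm
  have hπI : Function.Bijective (π.lTensor I) :=
    (Ideal.isTorsionBySet_of_le_of_mul_eq_bot hI le_rfl).lTensor_bijective hsurj hker
  have hu0surj : Function.Surjective u0 :=
    surjective_of_range_eq_smul_top hinj (hexact.trans hker) hu0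
  constructor
  · intro hE
    refine ⟨Module.Flat.quotient_of_bijective_liftQ hM _ hcan, ?_, hu0surj⟩
    have h := Module.Flat.iff_lift_lsmul_comp_subtype_injective'.mp hE I
    rw [hmul, coe_comp, coe_comp] at h
    exact h.of_comp.of_comp_right hπI.2
  · rintro ⟨hflat, hu0inj, -⟩
    refine Module.Flat.of_injective_lift_lsmul_of_flat_quotient hI hM hflat hsurj hker ?_
    rw [hmul]
    exact hinj.comp (hu0inj.comp hπI.1)
end
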